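/- Let β ∈ (0,1) and c > 0. For every n ∈ ℕ, the function x ↦ sin(nx), restricted to [0,2π], belongs to B^{β,c}([0,2π]); that is, there exists g ∈ L¹(ℝ) with g(x) = sin(nx) for all x ∈ [0,2π] and ∫_ℝ e^{c|ξ|^β} |𝓕g(ξ)| dξ < ∞. -/

import Mathlib

open MeasureTheory Real
open scoped ENNReal NNReal

noncomputable section

/-- One-dimensional Fourier transform with the convention
𝓕g(ξ) = (2π)^{−1/2} ∫ g(x) e^{−i x ξ} dx. -/
def fourier1 (g : ℝ → ℂ) (ξ : ℝ) : ℂ :=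
  (((2 * Real.pi) ^ (-(1 : ℝ) / 2) : ℝ) : ℂ) *
    ∫ x : ℝ, g x * Complex.exp (-(Complex.I * (x : ℂ) * (ξ : ℂ)))

/-- The exponential spectral Barron norm on ℝ (d = 1), with values in `ℝ≥0∞`;
the infimum of the empty set is `⊤`. -/
def expBarronNorm1 (β c : ℝ) (U : Set ℝ) (f : ℝ → ℝ) : ℝ≥0∞ :=
  sInf {y : ℝ≥0∞ | ∃ fe : ℝ → ℝ, Integrable fe ∧ Set.EqOn fe f U ∧
    y = ∫⁻ ξ, ENNReal.ofReal
      (Real.exp (c * |ξ| ^ β) * ‖fourier1 (fun x => (fe x : ℂ)) ξ‖)}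

namespace S10

def ss (β : ℝ) : ℝ := 2 / (1 + β)

def TT (β : ℝ) : ℝ := ∑' k : ℕ, (k : ℝ) ^ (-ss β)

def aa (β : ℝ) (k : ℕ) : ℝ := (TT β)⁻¹ * (k : ℝ) ^ (-ss β)

def uu (β : ℝ) (k : ℕ) : ℝ → ℝ :=
  Set.indicator (Set.Icc (-(aa β k)) (aa β k)) fun _ => (2 * aa β k)⁻¹

def W0 : ℝ → ℝ := fun x => max 0 (min 1 (min (x + 2) (2 * Real.pi + 2 - x)))

def WW (β : ℝ) : ℕ → ℝ → ℝ
  | 0 => W0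
  | m + 1 => fun x => ∫ t, uu β (m + 1) t * WW β m (x - t)

variable {β : ℝ}

lemma ss_gt (hβ0 : 0 < β) (hβ1 : β < 1) : 1 < ss β := by
  rw [ss, lt_div_iff₀ (by linarith)]; linarith

lemma summable_g (hβ0 : 0 < β) (hβ1 : β < 1) :
    Summable (fun k : ℕ => (k : ℝ) ^ (-ss β)) := by
  rw [Real.summable_nat_rpow]
  have := ss_gt hβ0 hβ1; linarith

lemma TT_one_le (hβ0 : 0 < β) (hβ1 : β < 1) : 1 ≤ TT β := by
  have h1 : ((1 : ℕ) : ℝ) ^ (-ss β) = 1 := by simp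
  calc (1 : ℝ) = ((1:ℕ):ℝ) ^ (-ss β) := h1.symm
    _ ≤ TT β := Summable.le_tsum (summable_g hβ0 hβ1) 1 fun k _ => Real.rpow_nonneg (Nat.cast_nonneg k) _

lemma TT_pos (hβ0 : 0 < β) (hβ1 : β < 1) : 0 < TT β :=
  lt_of_lt_of_le one_pos (TT_one_le hβ0 hβ1)

lemma aa_nonneg (hβ0 : 0 < β) (hβ1 : β < 1) (k : ℕ) : 0 ≤ aa β k :=
  mul_nonneg (inv_nonneg.2 (TT_pos hβ0 hβ1).le) (Real.rpow_nonneg (Nat.cast_nonneg k) _)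

lemma aa_pos (hβ0 : 0 < β) (hβ1 : β < 1) {k : ℕ} (hk : 1 ≤ k) : 0 < aa β k := by
  apply mul_pos (inv_pos.2 (TT_pos hβ0 hβ1))
  apply Real.rpow_pos_of_pos
  exact_mod_cast Nat.pos_of_ne_zero (by omega)

lemma aa_le_one (hβ0 : 0 < β) (hβ1 : β < 1) (k : ℕ) : aa β k ≤ 1 := by
  rcases Nat.eq_zero_or_pos k with rfl | hk
  · simp [aa, Real.zero_rpow (by have := ss_gt hβ0 hβ1; intro h; simp at h; linarith : -ss β ≠ 0)]
  · have h1 : (k : ℝ) ^ (-ss β) ≤ 1 := by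
      apply Real.rpow_le_one_of_one_le_of_nonpos (by exact_mod_cast hk)
      have := ss_gt hβ0 hβ1; linarith
    have h2 : (TT β)⁻¹ ≤ 1 := by
      rw [inv_le_one_iff₀]; right; exact TT_one_le hβ0 hβ1
    calc aa β k ≤ (TT β)⁻¹ * 1 := by
          apply mul_le_mul_of_nonneg_left h1 (inv_nonneg.2 (TT_pos hβ0 hβ1).le)
      _ ≤ 1 := by simpa using h2

lemma sum_aa_le (hβ0 : 0 < β) (hβ1 : β < 1) (s : Finset ℕ) : ∑ k ∈ s, aa β k ≤ 1 := by
  have hs : Summable (fun k : ℕ => aa β k) := (summable_g hβ0 hβ1).mul_left _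
  have h1 : ∑ k ∈ s, aa β k ≤ ∑' k, aa β k :=
    Summable.sum_le_tsum s (fun k _ => aa_nonneg hβ0 hβ1 k) hs
  have h2 : ∑' k, aa β k = 1 := by
    simp only [aa]
    rw [tsum_mul_left]
    exact inv_mul_cancel₀ (TT_pos hβ0 hβ1).ne'
  linarith

lemma uu_nonneg (hβ0 : 0 < β) (hβ1 : β < 1) (k : ℕ) (t : ℝ) : 0 ≤ uu β k t := by
  apply Set.indicator_nonneg
  intro x _
  have := aa_nonneg hβ0 hβ1 k
  positivity

lemma uu_meas (k : ℕ) : Measurable (uu β k) :=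
  (measurable_const).indicator measurableSet_Icc

lemma uu_integrable (k : ℕ) : Integrable (uu β k) := by
  rw [uu, integrable_indicator_iff measurableSet_Icc]
  exact integrableOn_const (by rw [Real.volume_Icc]; exact ENNReal.ofReal_ne_top) 

lemma uu_supp {k : ℕ} {t : ℝ} (h : uu β k t ≠ 0) : |t| ≤ aa β k := by
  by_contra hc
  apply h
  rw [uu, Set.indicator_apply_eq_zero]
  intro ht
  exfalso
  rcases ht with ⟨h1, h2⟩
  rw [abs_le] at hc; push_neg at hc
  rcases hc (by linarith) with h3
  linarith

lemma uu_int_one (hβ0 : 0 < β) (hβ1 : β < 1) {k : ℕ} (hk : 1 ≤ k) : ∫ t, uu β k t = 1 := by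
  have ha := aa_pos hβ0 hβ1 hk
  rw [uu, integral_indicator measurableSet_Icc, setIntegral_const, measureReal_def, Real.volume_Icc, smul_eq_mul]
  rw [ENNReal.toReal_ofReal (by linarith)]
  have : aa β k - -aa β k = 2 * aa β k := by ring
  rw [this]
  field_simp


def AA (β : ℝ) (m : ℕ) : ℝ := ∑ k ∈ Finset.range (m + 1), aa β k

lemma AA_nonneg (hβ0 : 0 < β) (hβ1 : β < 1) (m : ℕ) : 0 ≤ AA β m :=
  Finset.sum_nonneg fun k _ => aa_nonneg hβ0 hβ1 k

lemma AA_le_one (hβ0 : 0 < β) (hβ1 : β < 1) (m : ℕ) : AA β m ≤ 1 := sum_aa_le hβ0 hβ1 _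

lemma AA_succ (m : ℕ) : AA β (m + 1) = AA β m + aa β (m + 1) := Finset.sum_range_succ _ _

lemma W0_lip : LipschitzWith 1 W0 := by
  have h1 : LipschitzWith 1 (fun x : ℝ => x + 2) :=
    LipschitzWith.of_dist_le_mul fun x y => by simp [Real.dist_eq]
  have h2 : LipschitzWith 1 (fun x : ℝ => 2 * Real.pi + 2 - x) :=
    LipschitzWith.of_dist_le_mul fun x y => by
      simp only [Real.dist_eq, NNReal.coe_one, one_mul]
      rw [show 2*Real.pi+2-x-(2*Real.pi+2-y) = -(x-y) by ring, abs_neg]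
  have h3 := (h1.min h2)
  rw [max_self] at h3
  exact (h3.const_min 1).const_max 0

lemma pi_gt : (2:ℝ) ≤ Real.pi := by
  have := Real.pi_gt_three; linarith

lemma WW_prop (hβ0 : 0 < β) (hβ1 : β < 1) : ∀ m : ℕ,
    LipschitzWith 1 (WW β m) ∧ (∀ x, |WW β m x| ≤ 1) ∧
    (∀ x, -1 + AA β m ≤ x → x ≤ 2 * Real.pi + 1 - AA β m → WW β m x = 1) ∧
    (∀ x, x < -2 - AA β m ∨ 2 * Real.pi + 2 + AA β m < x → WW β m x = 0) := by
  intro m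
  induction m with
  | zero =>
    refine ⟨W0_lip, ?_, ?_, ?_⟩
    · intro x
      show |W0 x| ≤ 1
      rw [abs_le]
      constructor
      · have : (0:ℝ) ≤ W0 x := le_max_left _ _
        linarith
      · exact max_le (by norm_num) (min_le_left _ _)
    · intro x hx1 hx2
      have hA : AA β 0 ≤ 1 := AA_le_one hβ0 hβ1 0
      have hA0 : 0 ≤ AA β 0 := AA_nonneg hβ0 hβ1 0
      have h : (1:ℝ) ≤ min (x + 2) (2 * Real.pi + 2 - x) := le_min (by linarith) (by linarith)
      show W0 x = 1
      rw [show W0 x = max 0 (min 1 (min (x + 2) (2 * Real.pi + 2 - x))) from rfl,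
        min_eq_left h, max_eq_right (by norm_num : (0:ℝ) ≤ 1)]
    · intro x hx
      have hA0 : 0 ≤ AA β 0 := AA_nonneg hβ0 hβ1 0
      have hpi := pi_gt
      show W0 x = 0
      rw [show W0 x = max 0 (min 1 (min (x + 2) (2 * Real.pi + 2 - x))) from rfl, max_eq_left]
      rcases hx with h | h
      · rw [min_le_iff]; right; rw [min_le_iff]; left; linarith
      · rw [min_le_iff]; right; rw [min_le_iff]; right; linarith
  | succ m ih =>
    obtain ⟨ihL, ihB, ih1, ih0⟩ := ih
    have hWm_meas : Measurable (WW β m) := ihL.continuous.measurable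
    have h_int : ∀ x : ℝ, Integrable (fun t => uu β (m+1) t * WW β m (x - t)) := by
      intro x
      apply (uu_integrable (m+1)).mono'
      · apply ((uu_meas (m+1)).mul
          (hWm_meas.comp (measurable_const.sub measurable_id))).aestronglyMeasurable
      · filter_upwards with t
        rw [Real.norm_eq_abs, abs_mul, abs_of_nonneg (uu_nonneg hβ0 hβ1 _ t)]
        calc uu β (m+1) t * |WW β m (x - t)| ≤ uu β (m+1) t * 1 :=
              mul_le_mul_of_nonneg_left (ihB _) (uu_nonneg hβ0 hβ1 _ t)
          _ = uu β (m+1) t := mul_one _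
    have hWW : WW β (m+1) = fun x => ∫ t, uu β (m + 1) t * WW β m (x - t) := rfl
    refine ⟨?_, ?_, ?_, ?_⟩
    · apply LipschitzWith.of_dist_le_mul
      intro x y
      rw [hWW]
      simp only [NNReal.coe_one, one_mul, Real.dist_eq]
      rw [← integral_sub (h_int x) (h_int y)]
      have hb : ∀ t, ‖uu β (m+1) t * WW β m (x - t) - uu β (m+1) t * WW β m (y - t)‖
          ≤ uu β (m+1) t * |x - y| := by
        intro t
        rw [← mul_sub, Real.norm_eq_abs, abs_mul, abs_of_nonneg (uu_nonneg hβ0 hβ1 _ t)]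
        apply mul_le_mul_of_nonneg_left _ (uu_nonneg hβ0 hβ1 _ t)
        have := ihL.dist_le_mul (x - t) (y - t)
        simpa [Real.dist_eq, show x - t - (y - t) = x - y by ring] using this
      rw [← Real.norm_eq_abs]
      calc ‖∫ t, (uu β (m+1) t * WW β m (x - t) - uu β (m+1) t * WW β m (y - t))‖
          ≤ ∫ t, uu β (m+1) t * |x - y| := by
            apply norm_integral_le_of_norm_le ((uu_integrable (m+1)).mul_const _)
            filter_upwards with t using hb t
        _ = (∫ t, uu β (m+1) t) * |x - y| := integral_mul_const _ _
        _ = |x - y| := by rw [uu_int_one hβ0 hβ1 (by omega)]; ring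
    · intro x
      rw [hWW]
      rw [← Real.norm_eq_abs]
      calc ‖∫ t, uu β (m+1) t * WW β m (x - t)‖ ≤ ∫ t, uu β (m+1) t := by
            apply norm_integral_le_of_norm_le (uu_integrable (m+1))
            filter_upwards with t
            rw [Real.norm_eq_abs, abs_mul, abs_of_nonneg (uu_nonneg hβ0 hβ1 _ t)]
            calc uu β (m+1) t * |WW β m (x - t)| ≤ uu β (m+1) t * 1 :=
                  mul_le_mul_of_nonneg_left (ihB _) (uu_nonneg hβ0 hβ1 _ t)
              _ = uu β (m+1) t := mul_one _
        _ = 1 := uu_int_one hβ0 hβ1 (by omega)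
    · intro x hx1 hx2
      rw [hWW]
      have : ∀ t, uu β (m+1) t * WW β m (x - t) = uu β (m+1) t := by
        intro t
        by_cases h : uu β (m+1) t = 0
        · simp [h]
        · have ht := uu_supp h
          rw [abs_le] at ht
          have hA := AA_succ (β := β) (m := m)
          have h1 : -1 + AA β m ≤ x - t := by
            have := aa_nonneg hβ0 hβ1 (m+1); linarith [ht.2]
          have h2 : x - t ≤ 2 * Real.pi + 1 - AA β m := by linarith [ht.1]
          rw [ih1 _ h1 h2, mul_one]
      simp only [this]
      exact uu_int_one hβ0 hβ1 (by omega)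
    · intro x hx
      rw [hWW]
      have : ∀ t, uu β (m+1) t * WW β m (x - t) = 0 := by
        intro t
        by_cases h : uu β (m+1) t = 0
        · simp [h]
        · have ht := uu_supp h
          rw [abs_le] at ht
          have hA := AA_succ (β := β) (m := m)
          have h0 : WW β m (x - t) = 0 := by
            apply ih0
            rcases hx with h' | h'
            · left; linarith [ht.1]
            · right; linarith [ht.2]
          rw [h0, mul_zero]
      simp only [this]
      exact integral_zero _ _


lemma claimA {β : ℝ} (hβ0 : 0 < β) (hβ1 : β ≤ 1) {x y : ℝ} (hx : 0 ≤ x) (hy : 0 ≤ y) :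
    (x + y) ^ β ≤ x ^ β + y ^ β := by
  calc (x + y) ^ β = ((x.toNNReal + y.toNNReal : ℝ≥0) : ℝ) ^ β := by
        rw [NNReal.coe_add, Real.coe_toNNReal _ hx, Real.coe_toNNReal _ hy]
    _ = (((x.toNNReal + y.toNNReal) ^ β : ℝ≥0) : ℝ) := by
        rw [NNReal.coe_rpow]
    _ ≤ ((x.toNNReal ^ β + y.toNNReal ^ β : ℝ≥0) : ℝ) :=
        NNReal.coe_le_coe.2 (NNReal.rpow_add_le_add_rpow _ _ hβ0.le hβ1)
    _ = x ^ β + y ^ β := by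
        rw [NNReal.coe_add, NNReal.coe_rpow, NNReal.coe_rpow, Real.coe_toNNReal _ hx,
          Real.coe_toNNReal _ hy]

lemma claimB {b2 cc : ℝ} (hb2 : 0 < b2) (hcc : 0 < cc) {p q : ℝ} (hp : 0 < p) (hpq : p < q) :
    ∃ C5 : ℝ, 0 ≤ C5 ∧ ∀ t : ℝ, 0 ≤ t → cc * t ^ p ≤ b2 * t ^ q + C5 := by
  set T : ℝ := max 1 ((cc / b2) ^ (q - p)⁻¹) with hT
  have hT1 : (1:ℝ) ≤ T := le_max_left _ _
  have hT0 : 0 ≤ T := by linarith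
  refine ⟨cc * T ^ p, by positivity, ?_⟩
  intro t ht
  by_cases htT : t ≤ T
  · have h1 : cc * t ^ p ≤ cc * T ^ p :=
      mul_le_mul_of_nonneg_left (Real.rpow_le_rpow ht htT hp.le) hcc.le
    have h2 : 0 ≤ b2 * t ^ q := mul_nonneg hb2.le (Real.rpow_nonneg ht q)
    linarith
  · push_neg at htT
    have h1t : (1:ℝ) ≤ t := le_trans hT1 htT.le
    have hqp : (0:ℝ) < q - p := sub_pos.2 hpq
    have key : cc ≤ b2 * t ^ (q - p) := by
      have hTle : (cc / b2) ^ (q - p)⁻¹ ≤ t := le_trans (le_max_right _ _) htT.le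
      have h0 : (0:ℝ) ≤ cc / b2 := by positivity
      have h2 : cc / b2 ≤ t ^ (q - p) := by
        calc cc / b2 = ((cc / b2) ^ (q - p)⁻¹) ^ (q - p) := by
              rw [← Real.rpow_mul h0, inv_mul_cancel₀ hqp.ne', Real.rpow_one]
          _ ≤ t ^ (q - p) := Real.rpow_le_rpow (Real.rpow_nonneg h0 _) hTle hqp.le
      calc cc = b2 * (cc / b2) := by field_simp
        _ ≤ b2 * t ^ (q - p) := mul_le_mul_of_nonneg_left h2 hb2.le
    have h3 : cc * t ^ p ≤ b2 * t ^ q := by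
      calc cc * t ^ p ≤ (b2 * t ^ (q - p)) * t ^ p :=
            mul_le_mul_of_nonneg_right key (Real.rpow_nonneg ht p)
        _ = b2 * t ^ q := by
            rw [mul_assoc, ← Real.rpow_add (lt_of_lt_of_le one_pos h1t)]
            ring_nf
    have h4 : 0 ≤ cc * T ^ p := by positivity
    linarith

lemma claimC {d : ℝ} (hd : 0 < d) {q : ℝ} (hq0 : 0 < q) :
    ∃ C6 : ℝ, 0 ≤ C6 ∧ ∀ t : ℝ, Real.exp (-(d * |t| ^ q)) ≤ C6 * (1 + t ^ 2)⁻¹ := by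
  set m : ℕ := ⌈2 / q⌉₊ with hm
  set C6 : ℝ := 2 * max 1 ((m.factorial : ℝ) * (d ^ m)⁻¹) with hC6
  have hC62 : (2:ℝ) ≤ C6 := by
    have : (1:ℝ) ≤ max 1 ((m.factorial : ℝ) * (d ^ m)⁻¹) := le_max_left _ _
    nlinarith
  refine ⟨C6, by linarith, ?_⟩
  intro t
  have hw0 : 0 ≤ d * |t| ^ q := mul_nonneg hd.le (Real.rpow_nonneg (abs_nonneg t) q)
  have ht2 : (0:ℝ) < 1 + t ^ 2 := by positivity
  have goal2 : Real.exp (-(d * |t| ^ q)) * (1 + t ^ 2) ≤ C6 := by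
    by_cases habs : |t| ≤ 1
    · have he : Real.exp (-(d * |t| ^ q)) ≤ 1 := by
        rw [← Real.exp_zero]
        exact Real.exp_le_exp.2 (by linarith)
      have htsq : t ^ 2 ≤ 1 := by nlinarith [sq_abs t, abs_nonneg t]
      nlinarith [Real.exp_pos (-(d * |t| ^ q))]
    · push_neg at habs
      have h2q : (2:ℝ) ≤ q * m := by
        have h := Nat.le_ceil (2 / q)
        calc (2:ℝ) = q * (2 / q) := by field_simp
          _ ≤ q * m := mul_le_mul_of_nonneg_left h hq0.le
      have hpow : t ^ 2 ≤ |t| ^ (q * (m:ℝ)) := by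
        have h1 : |t| ^ (((2:ℕ)):ℝ) ≤ |t| ^ (q * (m:ℝ)) :=
          Real.rpow_le_rpow_of_exponent_le habs.le (by exact_mod_cast h2q)
        rwa [Real.rpow_natCast, sq_abs] at h1
      have hwm : d ^ m * t ^ 2 ≤ (d * |t| ^ q) ^ m := by
        rw [mul_pow]
        apply mul_le_mul_of_nonneg_left ?_ (pow_nonneg hd.le m)
        calc t ^ 2 ≤ |t| ^ (q * (m:ℝ)) := hpow
          _ = (|t| ^ q) ^ m := by
              rw [← Real.rpow_natCast (|t| ^ q) m, ← Real.rpow_mul (abs_nonneg t)]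
      have hexp : (d * |t| ^ q) ^ m / (m.factorial : ℝ) ≤ Real.exp (d * |t| ^ q) := by
        calc (d * |t| ^ q) ^ m / (m.factorial : ℝ)
            ≤ ∑ i ∈ Finset.range (m + 1), (d * |t| ^ q) ^ i / (i.factorial : ℝ) := by
              apply Finset.single_le_sum (f := fun i => (d * |t| ^ q) ^ i / (i.factorial : ℝ))
                ?_ (Finset.self_mem_range_succ m)
              intro i _
              positivity
          _ ≤ Real.exp (d * |t| ^ q) := Real.sum_le_exp_of_nonneg hw0 _
      have hdm : (0:ℝ) < d ^ m := pow_pos hd m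
      have hfac : (0:ℝ) < (m.factorial : ℝ) := by exact_mod_cast m.factorial_pos
      have h5 : d ^ m * t ^ 2 ≤ (m.factorial : ℝ) * Real.exp (d * |t| ^ q) := by
        rw [div_le_iff₀ hfac] at hexp
        calc d ^ m * t ^ 2 ≤ (d * |t| ^ q) ^ m := hwm
          _ ≤ Real.exp (d * |t| ^ q) * (m.factorial : ℝ) := hexp
          _ = (m.factorial : ℝ) * Real.exp (d * |t| ^ q) := mul_comm _ _
      have ht2le : t ^ 2 ≤ (m.factorial : ℝ) * (d ^ m)⁻¹ * Real.exp (d * |t| ^ q) := by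
        have h6 := mul_le_mul_of_nonneg_left h5 (inv_nonneg.2 hdm.le)
        calc t ^ 2 = (d ^ m)⁻¹ * (d ^ m * t ^ 2) := by field_simp
          _ ≤ (d ^ m)⁻¹ * ((m.factorial : ℝ) * Real.exp (d * |t| ^ q)) := h6
          _ = (m.factorial : ℝ) * (d ^ m)⁻¹ * Real.exp (d * |t| ^ q) := by ring
      have h1t2 : 1 + t ^ 2 ≤ 2 * t ^ 2 := by nlinarith [sq_abs t]
      have hfin : Real.exp (-(d * |t| ^ q)) * (1 + t ^ 2)
          ≤ 2 * ((m.factorial : ℝ) * (d ^ m)⁻¹) := by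
        calc Real.exp (-(d * |t| ^ q)) * (1 + t ^ 2)
            ≤ Real.exp (-(d * |t| ^ q)) * (2 * t ^ 2) :=
              mul_le_mul_of_nonneg_left h1t2 (Real.exp_pos _).le
          _ ≤ Real.exp (-(d * |t| ^ q)) *
              (2 * ((m.factorial : ℝ) * (d ^ m)⁻¹ * Real.exp (d * |t| ^ q))) := by
              apply mul_le_mul_of_nonneg_left ?_ (Real.exp_pos _).le
              nlinarith
          _ = 2 * ((m.factorial : ℝ) * (d ^ m)⁻¹) *
              (Real.exp (-(d * |t| ^ q)) * Real.exp (d * |t| ^ q)) := by ring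
          _ = 2 * ((m.factorial : ℝ) * (d ^ m)⁻¹) := by
              rw [← Real.exp_add]
              simp
      apply hfin.trans
      rw [hC6]
      have := le_max_right (1:ℝ) ((m.factorial : ℝ) * (d ^ m)⁻¹)
      linarith
  rw [← div_eq_mul_inv, le_div_iff₀ ht2]
  exact goal2


section FT
variable (hβ0 : 0 < β) (hβ1 : β < 1)

def Gind : ℝ → ℝ := Set.indicator (Set.Icc (-3) (2 * Real.pi + 3)) fun _ => 1

lemma Gind_nonneg (x : ℝ) : 0 ≤ Gind x := Set.indicator_nonneg (fun _ _ => zero_le_one) x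

lemma Gind_integrable : Integrable Gind := by
  rw [Gind, integrable_indicator_iff measurableSet_Icc]
  exact integrableOn_const (by rw [Real.volume_Icc]; exact ENNReal.ofReal_ne_top)

lemma Gind_integral : ∫ x, Gind x = 2 * Real.pi + 6 := by
  have hpi := Real.pi_gt_three
  rw [Gind, integral_indicator measurableSet_Icc, setIntegral_const, measureReal_def, Real.volume_Icc,
    smul_eq_mul, ENNReal.toReal_ofReal (by linarith)]
  ring

include hβ0 hβ1 in
lemma WW_le_Gind (m : ℕ) (x : ℝ) : |WW β m x| ≤ Gind x := by
  obtain ⟨_, hB, _, h0⟩ := WW_prop hβ0 hβ1 m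
  have hA0 := AA_nonneg hβ0 hβ1 m
  have hA1 := AA_le_one hβ0 hβ1 m
  by_cases hx : x ∈ Set.Icc (-3 : ℝ) (2 * Real.pi + 3)
  · rw [Gind, Set.indicator_of_mem hx]; exact hB x
  · rw [Gind, Set.indicator_of_notMem hx]
    rw [Set.mem_Icc] at hx; push_neg at hx
    have : WW β m x = 0 := by
      apply h0
      by_cases h : x < -3
      · left; linarith
      · right; push_neg at h; specialize hx (by linarith); linarith
    rw [this, abs_zero]

def FF (β : ℝ) (m : ℕ) (ξ : ℝ) : ℂ :=
  ∫ x : ℝ, (WW β m x : ℂ) * Complex.exp (-(Complex.I * x * ξ))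

def SSc (β : ℝ) (k : ℕ) (ξ : ℝ) : ℂ :=
  ∫ t : ℝ, (uu β k t : ℂ) * Complex.exp (-(Complex.I * t * ξ))

lemma norm_exp_fact (r q : ℝ) : ‖Complex.exp (-(Complex.I * r * q))‖ = 1 := by
  rw [Complex.norm_exp]
  simp

lemma norm_exp_fact' (z : ℂ) (hz : z.re = 0) : ‖Complex.exp z‖ = 1 := by
  rw [Complex.norm_exp, hz, Real.exp_zero]

include hβ0 hβ1 in
lemma FF_integrand_integrable (m : ℕ) (ξ : ℝ) :
    Integrable (fun x : ℝ => (WW β m x : ℂ) * Complex.exp (-(Complex.I * x * ξ))) := by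
  apply (Gind_integrable).mono'
  · apply AEStronglyMeasurable.mul
    · exact (Complex.measurable_ofReal.comp
        (WW_prop hβ0 hβ1 m).1.continuous.measurable).aestronglyMeasurable
    · apply Continuous.aestronglyMeasurable
      exact Complex.continuous_exp.comp
        (((continuous_const.mul Complex.continuous_ofReal).mul continuous_const).neg)
  · filter_upwards with x
    rw [norm_mul, norm_exp_fact, mul_one, Complex.norm_real, Real.norm_eq_abs]
    exact WW_le_Gind hβ0 hβ1 m x

include hβ0 hβ1 in
lemma FF_le (m : ℕ) (ξ : ℝ) : ‖FF β m ξ‖ ≤ 2 * Real.pi + 6 := by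
  rw [FF, ← Gind_integral]
  apply norm_integral_le_of_norm_le Gind_integrable
  filter_upwards with x
  rw [norm_mul, norm_exp_fact, mul_one, Complex.norm_real, Real.norm_eq_abs]
  exact WW_le_Gind hβ0 hβ1 m x

include hβ0 hβ1 in
lemma SS_le_one {k : ℕ} (hk : 1 ≤ k) (ξ : ℝ) : ‖SSc β k ξ‖ ≤ 1 := by
  rw [SSc, ← uu_int_one hβ0 hβ1 hk]
  apply norm_integral_le_of_norm_le (uu_integrable k)
  filter_upwards with t
  rw [norm_mul, norm_exp_fact, mul_one, Complex.norm_real, Real.norm_eq_abs,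
    abs_of_nonneg (uu_nonneg hβ0 hβ1 k t)]

include hβ0 hβ1 in
lemma SS_le_inv {k : ℕ} (hk : 1 ≤ k) {ξ : ℝ} (hξ : ξ ≠ 0) :
    ‖SSc β k ξ‖ ≤ (aa β k * |ξ|)⁻¹ := by
  have ha := aa_pos hβ0 hβ1 hk
  have h1 : (fun t : ℝ => (uu β k t : ℂ) * Complex.exp (-(Complex.I * t * ξ)))
      = Set.indicator (Set.Icc (-(aa β k)) (aa β k))
        (fun t : ℝ => ((2 * aa β k : ℝ)⁻¹ : ℂ) * Complex.exp (-(Complex.I * t * ξ))) := by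
    funext t
    by_cases ht : t ∈ Set.Icc (-(aa β k)) (aa β k)
    · rw [Set.indicator_of_mem ht, uu, Set.indicator_of_mem ht]
      push_cast
      ring
    · rw [Set.indicator_of_notMem ht, uu, Set.indicator_of_notMem ht]
      simp
  rw [SSc, h1, integral_indicator measurableSet_Icc, integral_const_mul]
  have h2 : ∫ t in Set.Icc (-(aa β k)) (aa β k), Complex.exp (-(Complex.I * t * ξ))
      = ∫ t in (-(aa β k))..(aa β k), Complex.exp (-(Complex.I * ξ) * t) := by
    rw [intervalIntegral.integral_of_le (by linarith)]
    rw [integral_Icc_eq_integral_Ioc]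
    congr 1
    funext t
    congr 1
    ring
  rw [h2, integral_exp_mul_complex (by simp [Complex.ext_iff, hξ] : -(Complex.I * ξ) ≠ 0)]
  rw [norm_mul, norm_div]
  have h3 : ‖Complex.exp (-(Complex.I * ξ) * (aa β k)) - Complex.exp (-(Complex.I * ξ) * (-(aa β k) : ℝ))‖ ≤ 2 := by
    apply (norm_sub_le _ _).trans
    have e1 : ‖Complex.exp (-(Complex.I * ξ) * (aa β k))‖ = 1 := by
      apply norm_exp_fact'; simp
    have e2 : ‖Complex.exp (-(Complex.I * ξ) * (-(aa β k) : ℝ))‖ = 1 := by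
      apply norm_exp_fact'; simp
    rw [e1, e2]; norm_num
  have h4n : ‖(-(Complex.I * (ξ:ℂ)))‖ = |ξ| := by
    simp
  have hn1 : ‖((2 * aa β k : ℝ) : ℂ)⁻¹‖ = (2 * aa β k)⁻¹ := by
    rw [norm_inv, Complex.norm_real, Real.norm_eq_abs, abs_of_nonneg (by positivity)]
  rw [hn1, h4n]
  have step : (2 * aa β k)⁻¹ * (‖Complex.exp (-(Complex.I * ξ) * (aa β k)) -
      Complex.exp (-(Complex.I * ξ) * ((-aa β k : ℝ)))‖ / |ξ|) ≤ (2 * aa β k)⁻¹ * (2 / |ξ|) := by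
    gcongr
  apply step.trans_eq
  rw [mul_inv]
  field_simp

lemma Gbig_nonneg (x : ℝ) :
    0 ≤ Set.indicator (Set.Icc (-4:ℝ) (2*Real.pi+4)) (fun _ => (1:ℝ)) x :=
  Set.indicator_nonneg (fun _ _ => zero_le_one) x

lemma Gbig_integrable :
    Integrable (Set.indicator (Set.Icc (-4:ℝ) (2*Real.pi+4)) (fun _ => (1:ℝ))) := by
  rw [integrable_indicator_iff measurableSet_Icc]
  exact integrableOn_const (by rw [Real.volume_Icc]; exact ENNReal.ofReal_ne_top)

include hβ0 hβ1 in
lemma FF_rec (m : ℕ) (ξ : ℝ) : FF β (m+1) ξ = SSc β (m+1) ξ * FF β m ξ := by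
  obtain ⟨hL, hB, h1, h0⟩ := WW_prop hβ0 hβ1 m
  have hWm_meas : Measurable (WW β m) := hL.continuous.measurable
  have hA0 := AA_nonneg hβ0 hβ1 m
  have hA1 := AA_le_one hβ0 hβ1 m
  have ha1 := aa_le_one hβ0 hβ1 (m+1)
  have key : Integrable (Function.uncurry fun x t =>
      ((uu β (m+1) t * WW β m (x - t) : ℝ) : ℂ) * Complex.exp (-(Complex.I * x * ξ)))
      (volume.prod volume) := by
    apply Integrable.mono'
      (g := fun z : ℝ × ℝ => Set.indicator (Set.Icc (-4:ℝ) (2*Real.pi+4)) (fun _ => (1:ℝ)) z.1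
        * uu β (m+1) z.2)
    · exact Gbig_integrable.mul_prod (uu_integrable _)
    · apply Measurable.aestronglyMeasurable
      apply Measurable.mul
      · exact Complex.measurable_ofReal.comp (((uu_meas (m+1)).comp measurable_snd).mul
          (hWm_meas.comp (measurable_fst.sub measurable_snd)))
      · exact Complex.measurable_exp.comp
          (((measurable_const.mul (Complex.measurable_ofReal.comp measurable_fst)).mul
            measurable_const).neg)
    · filter_upwards with z
      obtain ⟨x, t⟩ := z
      simp only [Function.uncurry]
      rw [norm_mul, norm_exp_fact, mul_one, Complex.norm_real, Real.norm_eq_abs]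
      by_cases hu : uu β (m+1) t = 0
      · simp [hu]
      · have htb : |t| ≤ aa β (m+1) := uu_supp hu
        rw [abs_le] at htb
        by_cases hw : WW β m (x - t) = 0
        · rw [hw, mul_zero, abs_zero]
          exact mul_nonneg (Gbig_nonneg x) (uu_nonneg hβ0 hβ1 _ t)
        · have hxt : -3 ≤ x - t ∧ x - t ≤ 2*Real.pi+3 := by
            by_contra hcon
            apply hw
            apply h0
            rcases not_and_or.1 hcon with h' | h'
            · left; push_neg at h'; linarith
            · right; push_neg at h'; linarith
          have hx4 : x ∈ Set.Icc (-4:ℝ) (2*Real.pi+4) := by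
            constructor <;> [skip; skip] <;> nlinarith [htb.1, htb.2, hxt.1, hxt.2]
          rw [Set.indicator_of_mem hx4]
          rw [abs_mul, abs_of_nonneg (uu_nonneg hβ0 hβ1 _ t), one_mul]
          calc uu β (m+1) t * |WW β m (x - t)| ≤ uu β (m+1) t * 1 :=
                mul_le_mul_of_nonneg_left (hB _) (uu_nonneg hβ0 hβ1 _ t)
            _ = uu β (m+1) t := mul_one _
  calc FF β (m+1) ξ
      = ∫ x : ℝ, (∫ t : ℝ, ((uu β (m+1) t * WW β m (x - t) : ℝ) : ℂ))
          * Complex.exp (-(Complex.I * x * ξ)) := by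
        rw [FF]
        congr 1
        funext x
        congr 1
        exact (integral_ofReal (f := fun t => uu β (m+1) t * WW β m (x - t)) (𝕜 := ℂ)).symm
    _ = ∫ x : ℝ, ∫ t : ℝ, ((uu β (m+1) t * WW β m (x - t) : ℝ) : ℂ)
          * Complex.exp (-(Complex.I * x * ξ)) := by
        congr 1
        funext x
        exact (integral_mul_const _ _).symm
    _ = ∫ t : ℝ, ∫ x : ℝ, ((uu β (m+1) t * WW β m (x - t) : ℝ) : ℂ)
          * Complex.exp (-(Complex.I * x * ξ)) := integral_integral_swap key
    _ = ∫ t : ℝ, (uu β (m+1) t : ℂ) * (FF β m ξ * Complex.exp (-(Complex.I * t * ξ))) := by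
        congr 1
        funext t
        have e1 : ∀ x : ℝ, ((uu β (m+1) t * WW β m (x - t) : ℝ) : ℂ)
            * Complex.exp (-(Complex.I * x * ξ))
            = (uu β (m+1) t : ℂ) * ((WW β m (x - t) : ℂ)
              * Complex.exp (-(Complex.I * x * ξ))) := by
          intro x; push_cast; ring
        simp only [e1]
        rw [integral_const_mul]
        congr 1
        have e2 : ∀ x : ℝ, (WW β m (x - t) : ℂ) * Complex.exp (-(Complex.I * x * ξ))
            = (fun y : ℝ => (WW β m y : ℂ)
              * Complex.exp (-(Complex.I * ((y : ℂ) + (t : ℂ)) * ξ))) (x - t) := by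
          intro x
          simp only []
          congr 2
          push_cast
          ring
        simp only [e2]
        rw [integral_sub_right_eq_self (fun y : ℝ => (WW β m y : ℂ)
          * Complex.exp (-(Complex.I * ((y : ℂ) + (t : ℂ)) * ξ))) t]
        have e3 : ∀ y : ℝ, (WW β m y : ℂ)
            * Complex.exp (-(Complex.I * ((y : ℂ) + (t : ℂ)) * ξ))
            = ((WW β m y : ℂ) * Complex.exp (-(Complex.I * y * ξ)))
              * Complex.exp (-(Complex.I * t * ξ)) := by
          intro y
          rw [show -(Complex.I * ((y:ℂ) + (t:ℂ)) * (ξ:ℂ))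
            = -(Complex.I * y * ξ) + -(Complex.I * t * ξ) by ring, Complex.exp_add]
          ring
        simp only [e3]
        rw [integral_mul_const]
        rfl
    _ = ∫ t : ℝ, ((uu β (m+1) t : ℂ) * Complex.exp (-(Complex.I * t * ξ))) * FF β m ξ := by
        congr 1
        funext t
        ring
    _ = SSc β (m+1) ξ * FF β m ξ := by
        rw [integral_mul_const]
        rfl

include hβ0 hβ1 in
lemma FF_decay (ξ : ℝ) (K : ℕ)
    (hK : ∀ k, 1 ≤ k → k ≤ K → Real.exp 1 ≤ aa β k * |ξ|) :
    ∀ m, K ≤ m → ‖FF β m ξ‖ ≤ (2 * Real.pi + 6) * ((Real.exp 1)⁻¹) ^ K := by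
  intro m
  induction m generalizing K with
  | zero =>
    intro hm
    interval_cases K
    simpa using FF_le hβ0 hβ1 0 ξ
  | succ m ih =>
    intro hm
    rw [FF_rec hβ0 hβ1 m ξ, norm_mul]
    by_cases hKm : K ≤ m
    · calc ‖SSc β (m+1) ξ‖ * ‖FF β m ξ‖
          ≤ 1 * ((2 * Real.pi + 6) * ((Real.exp 1)⁻¹) ^ K) :=
            mul_le_mul (SS_le_one hβ0 hβ1 (by omega) ξ) (ih K hK hKm) (norm_nonneg _)
              zero_le_one
        _ = (2 * Real.pi + 6) * ((Real.exp 1)⁻¹) ^ K := one_mul _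
    · have hK1 : K = m + 1 := by omega
      subst hK1
      have hkm : Real.exp 1 ≤ aa β (m+1) * |ξ| := hK (m+1) (by omega) le_rfl
      have hξ0 : ξ ≠ 0 := by
        intro h
        rw [h] at hkm
        simp at hkm
        exact absurd hkm (not_le.2 (Real.exp_pos 1))
      have hSe : ‖SSc β (m+1) ξ‖ ≤ (Real.exp 1)⁻¹ := by
        apply (SS_le_inv hβ0 hβ1 (show 1 ≤ m+1 by omega) hξ0).trans
        exact inv_anti₀ (Real.exp_pos 1) hkm
      have hF := ih m (fun k hk1 hk2 => hK k hk1 (by omega)) le_rfl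
      calc ‖SSc β (m+1) ξ‖ * ‖FF β m ξ‖
          ≤ (Real.exp 1)⁻¹ * ((2 * Real.pi + 6) * ((Real.exp 1)⁻¹) ^ m) :=
            mul_le_mul hSe hF (norm_nonneg _) (by positivity)
        _ = (2 * Real.pi + 6) * ((Real.exp 1)⁻¹) ^ (m+1) := by ring

end FT

section Main
variable (hβ0 : 0 < β) (hβ1 : β < 1)

include hβ0 hβ1 in
lemma WW_step (m : ℕ) (x : ℝ) : |WW β (m+1) x - WW β m x| ≤ aa β (m+1) := by
  obtain ⟨hL, hB, _, _⟩ := WW_prop hβ0 hβ1 m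
  have hWm_meas : Measurable (WW β m) := hL.continuous.measurable
  have h_int : Integrable (fun t => uu β (m+1) t * WW β m (x - t)) := by
    apply (uu_integrable (m+1)).mono'
    · exact ((uu_meas (m+1)).mul
        (hWm_meas.comp (measurable_const.sub measurable_id))).aestronglyMeasurable
    · filter_upwards with t
      rw [Real.norm_eq_abs, abs_mul, abs_of_nonneg (uu_nonneg hβ0 hβ1 _ t)]
      calc uu β (m+1) t * |WW β m (x - t)| ≤ uu β (m+1) t * 1 :=
            mul_le_mul_of_nonneg_left (hB _) (uu_nonneg hβ0 hβ1 _ t)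
        _ = uu β (m+1) t := mul_one _
  have hconst : WW β m x = ∫ t, uu β (m+1) t * WW β m x := by
    rw [integral_mul_const, uu_int_one hβ0 hβ1 (by omega), one_mul]
  have hrw : WW β (m+1) x - WW β m x
      = ∫ t, (uu β (m+1) t * WW β m (x - t) - uu β (m+1) t * WW β m x) := by
    rw [integral_sub h_int ((uu_integrable (m+1)).mul_const _)]
    rw [show WW β (m+1) x = ∫ t, uu β (m+1) t * WW β m (x - t) from rfl]
    rw [← hconst]
  rw [hrw, ← Real.norm_eq_abs]
  calc ‖∫ t, (uu β (m+1) t * WW β m (x - t) - uu β (m+1) t * WW β m x)‖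
      ≤ ∫ t, uu β (m+1) t * aa β (m+1) := by
        apply norm_integral_le_of_norm_le ((uu_integrable (m+1)).mul_const _)
        filter_upwards with t
        rw [← mul_sub, Real.norm_eq_abs, abs_mul, abs_of_nonneg (uu_nonneg hβ0 hβ1 _ t)]
        by_cases hu : uu β (m+1) t = 0
        · rw [hu, zero_mul, zero_mul]
        · apply mul_le_mul_of_nonneg_left ?_ (uu_nonneg hβ0 hβ1 _ t)
          have h1 : |WW β m (x - t) - WW β m x| ≤ |t| := by
            have := hL.dist_le_mul (x - t) x
            simpa [Real.dist_eq, show x - t - x = -t by ring, abs_neg] using this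
          exact h1.trans (uu_supp hu)
    _ = aa β (m+1) := by
        rw [integral_mul_const, uu_int_one hβ0 hβ1 (by omega), one_mul]

include hβ0 hβ1 in
lemma exists_W : ∃ Wf : ℝ → ℝ, LipschitzWith 1 Wf ∧ (∀ x, |Wf x| ≤ Gind x) ∧
    (∀ x, 0 ≤ x → x ≤ 2 * Real.pi → Wf x = 1) ∧
    ∀ ζ : ℝ, ‖∫ x : ℝ, (Wf x : ℂ) * Complex.exp (-(Complex.I * x * ζ))‖
      ≤ (2 * Real.pi + 6) *
        Real.exp (1 - ((TT β)⁻¹ / Real.exp 1) ^ (ss β)⁻¹ * |ζ| ^ (ss β)⁻¹) := by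
  have hs0 : (0:ℝ) < ss β := lt_trans one_pos (ss_gt hβ0 hβ1)
  -- Cauchy sequence
  have hsum : Summable (fun m : ℕ => aa β (m+1)) := by
    rw [summable_nat_add_iff 1]
    exact (summable_g hβ0 hβ1).mul_left _
  have hcs : ∀ x : ℝ, CauchySeq (fun m => WW β m x) := by
    intro x
    apply cauchySeq_of_dist_le_of_summable (fun m => aa β (m+1)) ?_ hsum
    intro m
    rw [Real.dist_eq, abs_sub_comm]
    exact WW_step hβ0 hβ1 m x
  choose Wf hWf using fun x => cauchySeq_tendsto_of_complete (hcs x)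
  have hlip : LipschitzWith 1 Wf := by
    apply LipschitzWith.of_dist_le_mul
    intro x y
    apply le_of_tendsto ((hWf x).dist (hWf y))
    filter_upwards with m
    simpa using (WW_prop hβ0 hβ1 m).1.dist_le_mul x y
  have hbnd : ∀ x, |Wf x| ≤ Gind x := by
    intro x
    apply le_of_tendsto (hWf x).abs
    filter_upwards with m using WW_le_Gind hβ0 hβ1 m x
  have hone : ∀ x, 0 ≤ x → x ≤ 2 * Real.pi → Wf x = 1 := by
    intro x h0 h2
    apply tendsto_nhds_unique (hWf x)
    have : ∀ m, WW β m x = 1 := by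
      intro m
      apply (WW_prop hβ0 hβ1 m).2.2.1 x
      · linarith [AA_le_one hβ0 hβ1 m, AA_nonneg hβ0 hβ1 m]
      · linarith [AA_le_one hβ0 hβ1 m, AA_nonneg hβ0 hβ1 m]
    simp only [this]
    exact tendsto_const_nhds
  refine ⟨Wf, hlip, hbnd, hone, ?_⟩
  intro ζ
  -- convergence of Fourier integrals
  have htend : Filter.Tendsto (fun m => FF β m ζ) Filter.atTop
      (nhds (∫ x : ℝ, (Wf x : ℂ) * Complex.exp (-(Complex.I * x * ζ)))) := by
    apply tendsto_integral_of_dominated_convergence Gind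
    · intro m
      apply AEStronglyMeasurable.mul
      · exact (Complex.measurable_ofReal.comp
          (WW_prop hβ0 hβ1 m).1.continuous.measurable).aestronglyMeasurable
      · exact (Complex.continuous_exp.comp
          (((continuous_const.mul Complex.continuous_ofReal).mul
            continuous_const).neg)).aestronglyMeasurable
    · exact Gind_integrable
    · intro m
      filter_upwards with x
      rw [norm_mul, norm_exp_fact, mul_one, Complex.norm_real, Real.norm_eq_abs]
      exact WW_le_Gind hβ0 hβ1 m x
    · filter_upwards with x
      exact (((Complex.continuous_ofReal.tendsto _).comp (hWf x)).mul tendsto_const_nhds)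
  -- choice of K
  set X : ℝ := (TT β)⁻¹ * |ζ| / Real.exp 1 with hX
  have hX0 : 0 ≤ X := by
    have := TT_pos hβ0 hβ1
    positivity
  set r : ℝ := X ^ (ss β)⁻¹ with hr
  have hr0 : 0 ≤ r := Real.rpow_nonneg hX0 _
  set K : ℕ := ⌊r⌋₊ with hK
  have hKr : (K : ℝ) ≤ r := Nat.floor_le hr0
  have hrK : r < K + 1 := Nat.lt_floor_add_one r
  have hyp : ∀ k, 1 ≤ k → k ≤ K → Real.exp 1 ≤ aa β k * |ζ| := by
    intro k hk1 hkK
    have hk0 : (0:ℝ) ≤ (k:ℝ) := Nat.cast_nonneg k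
    have hkr : (k:ℝ) ≤ r := le_trans (by exact_mod_cast hkK) hKr
    have hks : (k:ℝ) ^ (ss β) ≤ X := by
      calc (k:ℝ) ^ (ss β) ≤ r ^ (ss β) := Real.rpow_le_rpow hk0 hkr hs0.le
        _ = X := by
          rw [hr, ← Real.rpow_mul hX0, inv_mul_cancel₀ hs0.ne', Real.rpow_one]
    have hk1s : (1:ℝ) ≤ (k:ℝ) ^ (ss β) := by
      calc (1:ℝ) = (1:ℝ) ^ (ss β) := (Real.one_rpow _).symm
        _ ≤ (k:ℝ) ^ (ss β) := Real.rpow_le_rpow zero_le_one (by exact_mod_cast hk1) hs0.le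
    have hkpos : (0:ℝ) < (k:ℝ) ^ (ss β) := lt_of_lt_of_le one_pos hk1s
    have haak : aa β k = (TT β)⁻¹ * ((k:ℝ) ^ (ss β))⁻¹ := by
      rw [aa, Real.rpow_neg hk0]
    rw [haak, show (TT β)⁻¹ * ((k:ℝ) ^ (ss β))⁻¹ * |ζ|
      = ((TT β)⁻¹ * |ζ|) / ((k:ℝ) ^ (ss β)) by ring]
    rw [le_div_iff₀ hkpos]
    have h6 : Real.exp 1 * ((k:ℝ) ^ (ss β)) ≤ Real.exp 1 * X :=
      mul_le_mul_of_nonneg_left hks (Real.exp_pos 1).le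
    have h7 : Real.exp 1 * X = (TT β)⁻¹ * |ζ| := by
      rw [hX, ← mul_div_assoc, mul_comm (Real.exp 1) ((TT β)⁻¹ * |ζ|), mul_div_assoc,
        div_self (Real.exp_ne_zero 1), mul_one]
    linarith
  have hlim : ‖∫ x : ℝ, (Wf x : ℂ) * Complex.exp (-(Complex.I * x * ζ))‖
      ≤ (2 * Real.pi + 6) * ((Real.exp 1)⁻¹) ^ K := by
    apply le_of_tendsto htend.norm
    rw [Filter.eventually_atTop]
    exact ⟨K, fun m hm => FF_decay hβ0 hβ1 ζ K hyp m hm⟩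
  apply hlim.trans
  have hpi := Real.pi_gt_three
  apply mul_le_mul_of_nonneg_left ?_ (by linarith)
  have hpow : ((Real.exp 1)⁻¹) ^ K = Real.exp (-(K:ℝ)) := by
    rw [← Real.exp_neg, ← Real.exp_nat_mul]
    norm_num
  rw [hpow, Real.exp_le_exp]
  have hDζ : ((TT β)⁻¹ / Real.exp 1) ^ (ss β)⁻¹ * |ζ| ^ (ss β)⁻¹ = r := by
    rw [hr, hX, show (TT β)⁻¹ * |ζ| / Real.exp 1 = ((TT β)⁻¹ / Real.exp 1) * |ζ| by ring]
    rw [Real.mul_rpow (by have := TT_pos hβ0 hβ1; positivity) (abs_nonneg ζ)]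
  rw [hDζ]
  linarith

end Main

end S10

open S10

/-- For β ∈ (0,1) and c > 0, the functions sin(nx) restricted to [0,2π]
belong to the exponential spectral Barron space B^{β,c}([0,2π]). -/
theorem stmt10 (β c : ℝ) (hβ0 : 0 < β) (hβ1 : β < 1) (hc : 0 < c) (n : ℕ) :
    ∃ g : ℝ → ℝ, Integrable g ∧
      (∀ x ∈ Set.Icc (0 : ℝ) (2 * Real.pi), g x = Real.sin (n * x)) ∧
      (∫⁻ ξ, ENNReal.ofReal
        (Real.exp (c * |ξ| ^ β) * ‖fourier1 (fun x => (g x : ℂ)) ξ‖)) ≠ ⊤ := by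
  obtain ⟨Wf, hlip, hbnd, hone, hFW⟩ := exists_W hβ0 hβ1
  have hpi := Real.pi_gt_three
  set α : ℝ := (ss β)⁻¹ with hα
  have hαval : α = (1 + β) / 2 := by rw [hα, ss, inv_div]
  have hα0 : 0 < α := by rw [hαval]; linarith
  have hβα : β < α := by rw [hαval]; linarith
  have hα1 : α ≤ 1 := by rw [hαval]; linarith
  set D : ℝ := ((TT β)⁻¹ / Real.exp 1) ^ (ss β)⁻¹ with hD
  have hD0 : 0 < D := by
    apply Real.rpow_pos_of_pos
    have := TT_pos hβ0 hβ1
    positivity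
  obtain ⟨C5, hC50, hB⟩ := claimB (div_pos hD0 two_pos) hc hβ0 hβα
  obtain ⟨C6, hC60, hCc⟩ := claimC (div_pos hD0 two_pos) hα0
  set M : ℝ := (2 * Real.pi + 6) * Real.exp (1 + C5 + c * (n : ℝ) ^ β) * C6 with hM
  have hM0 : 0 ≤ M := by positivity
  -- the function
  refine ⟨fun x => Real.sin (n * x) * Wf x, ?_, ?_, ?_⟩
  · apply Gind_integrable.mono'
    · exact ((Real.continuous_sin.comp (continuous_const.mul continuous_id)).mul
        hlip.continuous).aestronglyMeasurable
    · filter_upwards with x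
      rw [Real.norm_eq_abs, abs_mul]
      have h1 : |Real.sin (n * x)| ≤ 1 := abs_le.2 ⟨Real.neg_one_le_sin _, Real.sin_le_one _⟩
      calc |Real.sin (n * x)| * |Wf x| ≤ 1 * Gind x :=
            mul_le_mul h1 (hbnd x) (abs_nonneg _) zero_le_one
        _ = Gind x := one_mul _
  · intro x hx
    dsimp only
    rw [hone x hx.1 hx.2, mul_one]
  · -- integrability of Fourier-type integrands
    have hFWint : ∀ ζ : ℝ, Integrable
        (fun x : ℝ => (Wf x : ℂ) * Complex.exp (-(Complex.I * x * ζ))) := by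
      intro ζ
      apply Gind_integrable.mono'
      · apply AEStronglyMeasurable.mul
        · exact (Complex.measurable_ofReal.comp hlip.continuous.measurable).aestronglyMeasurable
        · exact (Complex.continuous_exp.comp
            (((continuous_const.mul Complex.continuous_ofReal).mul
              continuous_const).neg)).aestronglyMeasurable
      · filter_upwards with x
        rw [norm_mul, norm_exp_fact, mul_one, Complex.norm_real, Real.norm_eq_abs]
        exact hbnd x
    -- splitting identity
    have hsplit : ∀ ξ : ℝ,
        (∫ x : ℝ, ((Real.sin (n * x) * Wf x : ℝ) : ℂ) * Complex.exp (-(Complex.I * x * ξ)))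
        = (2 * Complex.I)⁻¹ *
          ((∫ x : ℝ, (Wf x : ℂ) * Complex.exp (-(Complex.I * x * ((ξ - n : ℝ) : ℝ))))
          - ∫ x : ℝ, (Wf x : ℂ) * Complex.exp (-(Complex.I * x * ((ξ + n : ℝ) : ℝ)))) := by
      intro ξ
      have h2I : ((2 : ℂ) * Complex.I)⁻¹ = -Complex.I / 2 := by
        rw [mul_inv, Complex.inv_I]
        ring
      have e4 : ∀ x : ℝ, ((Real.sin (n * x) * Wf x : ℝ) : ℂ)
          * Complex.exp (-(Complex.I * x * ξ))
          = (2 * Complex.I)⁻¹ *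
            ((Wf x : ℂ) * Complex.exp (-(Complex.I * x * ((ξ - n : ℝ) : ℝ)))
            - (Wf x : ℂ) * Complex.exp (-(Complex.I * x * ((ξ + n : ℝ) : ℝ)))) := by
        intro x
        rw [Complex.ofReal_mul, Complex.ofReal_sin, Complex.sin]
        rw [show -(Complex.I * (x:ℂ) * (((ξ - n : ℝ) : ℝ) : ℂ))
              = -(Complex.I * x * ξ) + ((((n:ℝ) * x : ℝ) : ℂ)) * Complex.I by push_cast; ring,
          show -(Complex.I * (x:ℂ) * (((ξ + n : ℝ) : ℝ) : ℂ))
              = -(Complex.I * x * ξ) + -(((((n:ℝ) * x : ℝ) : ℂ)) * Complex.I) by push_cast; ring,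
          Complex.exp_add, Complex.exp_add, h2I]
        rw [show -((((n:ℝ) * x : ℝ) : ℂ)) * Complex.I
            = -(((((n:ℝ) * x : ℝ) : ℂ)) * Complex.I) by ring]
        ring
      simp only [e4]
      rw [integral_const_mul, integral_sub (hFWint _) (hFWint _)]
    -- norm bound
    have hnorm : ∀ ξ : ℝ,
        ‖fourier1 (fun x => ((Real.sin (n * x) * Wf x : ℝ) : ℂ)) ξ‖
        ≤ ‖∫ x : ℝ, (Wf x : ℂ) * Complex.exp (-(Complex.I * x * ((ξ - n : ℝ) : ℝ)))‖
          + ‖∫ x : ℝ, (Wf x : ℂ) * Complex.exp (-(Complex.I * x * ((ξ + n : ℝ) : ℝ)))‖ := by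
      intro ξ
      rw [fourier1, hsplit ξ, norm_mul, norm_mul]
      have hc0 : ‖(((2 * Real.pi) ^ (-(1:ℝ) / 2) : ℝ) : ℂ)‖ ≤ 1 := by
        rw [Complex.norm_real, Real.norm_eq_abs,
          abs_of_nonneg (Real.rpow_nonneg (by linarith) _)]
        apply Real.rpow_le_one_of_one_le_of_nonpos (by linarith)
        norm_num
      have h2I : ‖((2 : ℂ) * Complex.I)⁻¹‖ = 1/2 := by
        rw [norm_inv, norm_mul, Complex.norm_I, mul_one]
        norm_num
      set A := ∫ x : ℝ, (Wf x : ℂ) * Complex.exp (-(Complex.I * x * ((ξ - n : ℝ) : ℝ)))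
      set B := ∫ x : ℝ, (Wf x : ℂ) * Complex.exp (-(Complex.I * x * ((ξ + n : ℝ) : ℝ)))
      have hAB : ‖A - B‖ ≤ ‖A‖ + ‖B‖ := norm_sub_le A B
      have step : ‖((2 : ℂ) * Complex.I)⁻¹‖ * ‖A - B‖ ≤ (1/2) * (‖A‖ + ‖B‖) := by
        rw [h2I]
        apply mul_le_mul_of_nonneg_left hAB (by norm_num)
      calc ‖(((2 * Real.pi) ^ (-(1:ℝ) / 2) : ℝ) : ℂ)‖ * (‖((2 : ℂ) * Complex.I)⁻¹‖ * ‖A - B‖)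
          ≤ 1 * ((1/2) * (‖A‖ + ‖B‖)) :=
            mul_le_mul hc0 step (by positivity) zero_le_one
        _ ≤ ‖A‖ + ‖B‖ := by
          have := norm_nonneg A
          have := norm_nonneg B
          linarith
    -- pointwise bound against integrable majorant
    have hterm : ∀ v ξ : ℝ, |ξ| ≤ |v| + (n : ℝ) →
        Real.exp (c * |ξ| ^ β) * ((2 * Real.pi + 6) * Real.exp (1 - D * |v| ^ α))
        ≤ M * (1 + v ^ 2)⁻¹ := by
      intro v ξ hle
      have h1 : c * |ξ| ^ β ≤ c * (|v| + (n : ℝ)) ^ β :=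
        mul_le_mul_of_nonneg_left
          (Real.rpow_le_rpow (abs_nonneg ξ) hle hβ0.le) hc.le
      have h2 : (|v| + (n : ℝ)) ^ β ≤ |v| ^ β + (n : ℝ) ^ β :=
        claimA hβ0 hβ1.le (abs_nonneg v) (Nat.cast_nonneg n)
      have h3 : c * |v| ^ β ≤ D / 2 * |v| ^ α + C5 := hB (|v|) (abs_nonneg v)
      have hexp1 : c * |ξ| ^ β + (1 - D * |v| ^ α)
          ≤ (1 + C5 + c * (n : ℝ) ^ β) + (-(D / 2 * |v| ^ α)) := by
        have h4 : c * (|v| + (n : ℝ)) ^ β ≤ c * |v| ^ β + c * (n : ℝ) ^ β := by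
          have := mul_le_mul_of_nonneg_left h2 hc.le
          linarith [this]
        linarith
      calc Real.exp (c * |ξ| ^ β) * ((2 * Real.pi + 6) * Real.exp (1 - D * |v| ^ α))
          = (2 * Real.pi + 6) * Real.exp (c * |ξ| ^ β + (1 - D * |v| ^ α)) := by
            rw [Real.exp_add]
            ring
        _ ≤ (2 * Real.pi + 6) * Real.exp ((1 + C5 + c * (n : ℝ) ^ β) + (-(D / 2 * |v| ^ α))) := by
            apply mul_le_mul_of_nonneg_left (Real.exp_le_exp.2 hexp1) (by linarith)
        _ = (2 * Real.pi + 6) * Real.exp (1 + C5 + c * (n : ℝ) ^ β)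
            * Real.exp (-(D / 2 * |v| ^ α)) := by
            rw [Real.exp_add]
            ring
        _ ≤ (2 * Real.pi + 6) * Real.exp (1 + C5 + c * (n : ℝ) ^ β) * (C6 * (1 + v ^ 2)⁻¹) := by
            apply mul_le_mul_of_nonneg_left (hCc v) (by positivity)
        _ = M * (1 + v ^ 2)⁻¹ := by
            rw [hM]
            ring
    have hE : ∀ ξ : ℝ, Real.exp (c * |ξ| ^ β)
        * ‖fourier1 (fun x => ((Real.sin (n * x) * Wf x : ℝ) : ℂ)) ξ‖
        ≤ M * (1 + (ξ - n) ^ 2)⁻¹ + M * (1 + (ξ + n) ^ 2)⁻¹ := by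
      intro ξ
      have hle1 : |ξ| ≤ |ξ - n| + (n : ℝ) := by
        calc |ξ| = |(ξ - n) + (n:ℝ)| := by congr 1; ring
          _ ≤ |ξ - n| + |(n:ℝ)| := abs_add_le _ _
          _ = |ξ - n| + (n : ℝ) := by rw [Nat.abs_cast]
      have hle2 : |ξ| ≤ |ξ + n| + (n : ℝ) := by
        calc |ξ| = |(ξ + n) - (n:ℝ)| := by congr 1; ring
          _ ≤ |ξ + n| + |(n:ℝ)| := abs_sub _ _
          _ = |ξ + n| + (n : ℝ) := by rw [Nat.abs_cast]
      have hn1 := (hFW (ξ - n)).trans (le_refl _)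
      have hn2 := (hFW (ξ + n)).trans (le_refl _)
      have hw0 : 0 ≤ Real.exp (c * |ξ| ^ β) := (Real.exp_pos _).le
      calc Real.exp (c * |ξ| ^ β)
            * ‖fourier1 (fun x => ((Real.sin (n * x) * Wf x : ℝ) : ℂ)) ξ‖
          ≤ Real.exp (c * |ξ| ^ β) *
            (‖∫ x : ℝ, (Wf x : ℂ) * Complex.exp (-(Complex.I * x * ((ξ - n : ℝ) : ℝ)))‖
            + ‖∫ x : ℝ, (Wf x : ℂ) * Complex.exp (-(Complex.I * x * ((ξ + n : ℝ) : ℝ)))‖) :=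
            mul_le_mul_of_nonneg_left (hnorm ξ) hw0
        _ ≤ Real.exp (c * |ξ| ^ β) *
            ((2 * Real.pi + 6) * Real.exp (1 - D * |ξ - n| ^ α)
            + (2 * Real.pi + 6) * Real.exp (1 - D * |ξ + n| ^ α)) := by
            apply mul_le_mul_of_nonneg_left ?_ hw0
            exact add_le_add hn1 hn2
        _ = Real.exp (c * |ξ| ^ β) * ((2 * Real.pi + 6) * Real.exp (1 - D * |ξ - n| ^ α))
            + Real.exp (c * |ξ| ^ β) * ((2 * Real.pi + 6) * Real.exp (1 - D * |ξ + n| ^ α)) := by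
            ring
        _ ≤ M * (1 + (ξ - n) ^ 2)⁻¹ + M * (1 + (ξ + n) ^ 2)⁻¹ :=
            add_le_add (hterm (ξ - n) ξ hle1) (hterm (ξ + n) ξ hle2)
    -- final lintegral computation
    have hmeas1 : Measurable fun ξ : ℝ => ENNReal.ofReal (M * (1 + (ξ - (n:ℝ)) ^ 2)⁻¹) := by
      apply ENNReal.measurable_ofReal.comp
      apply Continuous.measurable
      exact continuous_const.mul
        ((continuous_const.add ((continuous_id.sub continuous_const).pow 2)).inv₀
          (fun x => (by positivity : (0:ℝ) < 1 + (x - (n:ℝ)) ^ 2).ne'))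
    have hintM : Integrable (fun v : ℝ => M * (1 + v ^ 2)⁻¹) :=
      integrable_inv_one_add_sq.const_mul M
    have hfin : (∫⁻ v : ℝ, ENNReal.ofReal (M * (1 + v ^ 2)⁻¹)) < ⊤ :=
      hintM.lintegral_lt_top
    have htrans1 : (∫⁻ ξ : ℝ, ENNReal.ofReal (M * (1 + (ξ - (n:ℝ)) ^ 2)⁻¹))
        = ∫⁻ v : ℝ, ENNReal.ofReal (M * (1 + v ^ 2)⁻¹) := by
      have := lintegral_add_right_eq_self (μ := (volume : Measure ℝ))
        (fun v : ℝ => ENNReal.ofReal (M * (1 + v ^ 2)⁻¹)) (-(n:ℝ))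
      simp only [← sub_eq_add_neg] at this
      exact this
    have htrans2 : (∫⁻ ξ : ℝ, ENNReal.ofReal (M * (1 + (ξ + (n:ℝ)) ^ 2)⁻¹))
        = ∫⁻ v : ℝ, ENNReal.ofReal (M * (1 + v ^ 2)⁻¹) :=
      lintegral_add_right_eq_self (μ := (volume : Measure ℝ))
        (fun v : ℝ => ENNReal.ofReal (M * (1 + v ^ 2)⁻¹)) ((n:ℝ))
    apply ne_of_lt
    calc (∫⁻ ξ, ENNReal.ofReal (Real.exp (c * |ξ| ^ β)
          * ‖fourier1 (fun x => ((Real.sin (n * x) * Wf x : ℝ) : ℂ)) ξ‖))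
        ≤ ∫⁻ ξ : ℝ, (ENNReal.ofReal (M * (1 + (ξ - (n:ℝ)) ^ 2)⁻¹)
          + ENNReal.ofReal (M * (1 + (ξ + (n:ℝ)) ^ 2)⁻¹)) := by
          apply lintegral_mono
          intro ξ
          calc ENNReal.ofReal (Real.exp (c * |ξ| ^ β)
                * ‖fourier1 (fun x => ((Real.sin (n * x) * Wf x : ℝ) : ℂ)) ξ‖)
              ≤ ENNReal.ofReal (M * (1 + (ξ - (n:ℝ)) ^ 2)⁻¹ + M * (1 + (ξ + (n:ℝ)) ^ 2)⁻¹) :=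
                ENNReal.ofReal_le_ofReal (hE ξ)
            _ = ENNReal.ofReal (M * (1 + (ξ - (n:ℝ)) ^ 2)⁻¹)
                + ENNReal.ofReal (M * (1 + (ξ + (n:ℝ)) ^ 2)⁻¹) :=
                ENNReal.ofReal_add (by positivity) (by positivity)
      _ = (∫⁻ ξ : ℝ, ENNReal.ofReal (M * (1 + (ξ - (n:ℝ)) ^ 2)⁻¹))
          + ∫⁻ ξ : ℝ, ENNReal.ofReal (M * (1 + (ξ + (n:ℝ)) ^ 2)⁻¹) :=
          lintegral_add_left hmeas1 _
      _ < ⊤ := by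
          rw [htrans1, htrans2]
          exact ENNReal.add_lt_top.2 ⟨hfin, hfin⟩

end
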